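/- arXiv:2505.02115 — 2 statements merged into one kernel-verified Lean document; each statement's English description precedes it below -/
import Mathlib

section
/- Under Assumption A with f2 = 0 and g1(y) = (1/2) yᵀPy + bᵀy where P is symmetric positive semidefinite and BBᵀ + P is positive definite, the saddle-point problem min_x max_y f1(x) + yᵀBx − g1(y) − g2(y) has a unique solution. Concretely: if (x*, y*) and (x°, y°) both satisfy the optimality conditions ∇f1(x) + Bᵀy = 0 and Bx − Py − b ∈ ∂g2(y), then x* = x° and y* = y°. -/
open scoped RealInnerProductSpace
open Matrix

/-- Action of a matrix on Euclidean space. -/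
noncomputable def mulE {m n : ℕ} (B : Matrix (Fin m) (Fin n) ℝ)
    (x : EuclideanSpace ℝ (Fin n)) : EuclideanSpace ℝ (Fin m) :=
  Matrix.toEuclideanLin B x

/-- Largest singular value (operator norm) of a matrix. -/
noncomputable def sigmaMax {m n : ℕ} (B : Matrix (Fin m) (Fin n) ℝ) : ℝ :=
  ‖LinearMap.toContinuousLinearMap (Matrix.toEuclideanLin B)‖

/-- Largest eigenvalue of a symmetric matrix (Rayleigh quotient formulation). -/
noncomputable def lambdaMax {n : ℕ} (P : Matrix (Fin n) (Fin n) ℝ) : ℝ :=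
  ⨆ v : Metric.sphere (0 : EuclideanSpace ℝ (Fin n)) 1,
    ⟪mulE P (v : EuclideanSpace ℝ (Fin n)), (v : EuclideanSpace ℝ (Fin n))⟫

/-- Smallest eigenvalue of a symmetric matrix (Rayleigh quotient formulation). -/
noncomputable def lambdaMin {n : ℕ} (P : Matrix (Fin n) (Fin n) ℝ) : ℝ :=
  ⨅ v : Metric.sphere (0 : EuclideanSpace ℝ (Fin n)) 1,
    ⟪mulE P (v : EuclideanSpace ℝ (Fin n)), (v : EuclideanSpace ℝ (Fin n))⟫

/-- `f` is `μ`-strongly convex: `f - μ/2 ‖·‖²` is convex. -/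
def StrongConvex {n : ℕ} (μ : ℝ) (f : EuclideanSpace ℝ (Fin n) → ℝ) : Prop :=
  ConvexOn ℝ Set.univ fun x => f x - μ / 2 * ‖x‖ ^ 2

/-- A function with values in `ℝ ∪ {+∞}` (modelled by `EReal`) is proper. -/
def ProperER {n : ℕ} (f : EuclideanSpace ℝ (Fin n) → EReal) : Prop :=
  (∀ x, f x ≠ ⊥) ∧ ∃ x, f x ≠ ⊤

/-- Convexity for `EReal`-valued functions. -/
def ConvexER {n : ℕ} (f : EuclideanSpace ℝ (Fin n) → EReal) : Prop :=
  ∀ x y : EuclideanSpace ℝ (Fin n), ∀ a b : ℝ, 0 ≤ a → 0 ≤ b → a + b = 1 →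
    f (a • x + b • y) ≤ (a : EReal) * f x + (b : EReal) * f y

/-- `s` is a subgradient of the `EReal`-valued convex function `f` at `x`. -/
def IsSubgradAt {n : ℕ} (f : EuclideanSpace ℝ (Fin n) → EReal)
    (x s : EuclideanSpace ℝ (Fin n)) : Prop :=
  ∀ z, f x + ((⟪s, z - x⟫ : ℝ) : EReal) ≤ f z

/-- `p` is the proximal point `prox_{t g}(w)`, i.e. it minimizes `g(·) + 1/(2t)‖· - w‖²`. -/
def IsProx {n : ℕ} (g : EuclideanSpace ℝ (Fin n) → EReal) (t : ℝ)
    (w p : EuclideanSpace ℝ (Fin n)) : Prop :=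
  ∀ z, g p + ((1 / (2 * t) * ‖p - w‖ ^ 2 : ℝ) : EReal)
      ≤ g z + ((1 / (2 * t) * ‖z - w‖ ^ 2 : ℝ) : EReal)

/-!
With `Δx = xs - xo` and `Δy = ys - yo`, strong convexity of `f1` gives
`μx ‖Δx‖² ≤ ⟪f1' xs - f1' xo, Δx⟫ = -⟪Δy, B Δx⟫`, while monotonicity of `∂g2` gives
`⟪Δy, B Δx⟫ ≥ ⟪Δy, P Δy⟫ ≥ 0`. Hence `Δx = 0`, so `Bᵀ Δy = 0` and `⟪Δy, P Δy⟫ = 0`, i.e.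
`⟪Δy, (B Bᵀ + P) Δy⟫ = 0`, and `Δy = 0` because `B Bᵀ + P` is positive definite.
-/

open AffineMap in
theorem StrongConvexOn.mul_norm_sq_le_inner_gradient_sub {E : Type*} [NormedAddCommGroup E]
    [InnerProductSpace ℝ E] [CompleteSpace E] {μ : ℝ} {f : E → ℝ} {f' : E → E}
    (hf : StrongConvexOn Set.univ μ f) (hgrad : ∀ x, HasGradientAt f (f' x) x) (x y : E) :
    μ * ‖y - x‖ ^ 2 ≤ ⟪f' y - f' x, y - x⟫ := by
  set φ : ℝ → ℝ := (fun z ↦ f z - μ / 2 * ‖z‖ ^ 2) ∘ lineMap x y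
  have hφ : ConvexOn ℝ Set.univ φ := (strongConvexOn_iff_convex.1 hf).comp_affineMap _
  have hφ' (t : ℝ) : HasDerivAt φ (⟪f' (lineMap x y t), y - x⟫ - μ * ⟪lineMap x y t, y - x⟫) t := by
    have hfd := (hgrad (lineMap x y t)).hasFDerivAt.comp_hasDerivAt t hasDerivAt_lineMap
    have hsq := (hasDerivAt_lineMap (a := x) (b := y) (x := t)).norm_sq.const_mul (μ / 2)
    refine (hfd.sub hsq).congr_deriv ?_
    simp only [InnerProductSpace.toDual_apply_apply]
    ring
  have hmono := (hφ.le_slope_of_hasDerivAt trivial trivial one_pos (hφ' 0)).trans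
    (hφ.slope_le_of_hasDerivAt trivial trivial one_pos (hφ' 1))
  simp only [lineMap_apply_zero, lineMap_apply_one] at hmono
  rw [inner_sub_left, ← real_inner_self_eq_norm_sq, inner_sub_left, mul_sub]
  linarith

section Subgradient

variable {n : ℕ} {g : EuclideanSpace ℝ (Fin n) → EReal}

theorem IsSubgradAt.ne_top (hg : ProperER g) {y s : EuclideanSpace ℝ (Fin n)}
    (hs : IsSubgradAt g y s) : g y ≠ ⊤ := by
  obtain ⟨z, hz⟩ := hg.2
  intro hy
  have := hs z
  rw [hy, EReal.top_add_of_ne_bot (EReal.coe_ne_bot _), top_le_iff] at this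
  exact hz this

theorem IsSubgradAt.inner_sub_nonneg (hg : ProperER g) {y₁ y₂ s₁ s₂ : EuclideanSpace ℝ (Fin n)}
    (h₁ : IsSubgradAt g y₁ s₁) (h₂ : IsSubgradAt g y₂ s₂) : 0 ≤ ⟪s₁ - s₂, y₁ - y₂⟫ := by
  have h₁₂ := h₁ y₂
  have h₂₁ := h₂ y₁
  lift g y₁ to ℝ using ⟨h₁.ne_top hg, hg.1 y₁⟩ with a
  lift g y₂ to ℝ using ⟨h₂.ne_top hg, hg.1 y₂⟩ with b
  norm_cast at h₁₂ h₂₁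
  rw [← neg_sub y₁, inner_neg_right] at h₁₂
  rw [inner_sub_left]
  linarith

end Subgradient

section MatrixAction

variable {m n : ℕ}

theorem mulE_sub (M : Matrix (Fin m) (Fin n) ℝ) (u v : EuclideanSpace ℝ (Fin n)) :
    mulE M (u - v) = mulE M u - mulE M v :=
  map_sub (Matrix.toEuclideanLin M) u v

theorem mulE_add_left (M N : Matrix (Fin m) (Fin n) ℝ) (v : EuclideanSpace ℝ (Fin n)) :
    mulE (M + N) v = mulE M v + mulE N v := by
  simp [mulE]

theorem mulE_mul {k : ℕ} (M : Matrix (Fin m) (Fin n) ℝ) (N : Matrix (Fin n) (Fin k) ℝ)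
    (v : EuclideanSpace ℝ (Fin k)) : mulE (M * N) v = mulE M (mulE N v) := by
  simp [mulE, Matrix.toLpLin_apply, Matrix.mulVec_mulVec]

theorem inner_mulE_transpose (M : Matrix (Fin m) (Fin n) ℝ) (y : EuclideanSpace ℝ (Fin m))
    (x : EuclideanSpace ℝ (Fin n)) : ⟪mulE Mᵀ y, x⟫ = ⟪y, mulE M x⟫ := by
  rw [mulE, mulE, ← Matrix.conjTranspose_eq_transpose_of_trivial,
    Matrix.toEuclideanLin_conjTranspose_eq_adjoint, LinearMap.adjoint_inner_left]

theorem inner_mulE_self (M : Matrix (Fin n) (Fin n) ℝ) (v : EuclideanSpace ℝ (Fin n)) :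
    ⟪v, mulE M v⟫ = v.ofLp ⬝ᵥ M *ᵥ v.ofLp := by
  rw [EuclideanSpace.inner_eq_star_dotProduct, dotProduct_comm]
  rfl

theorem Matrix.PosSemidef.inner_mulE_self_nonneg {M : Matrix (Fin n) (Fin n) ℝ} (hM : M.PosSemidef)
    (v : EuclideanSpace ℝ (Fin n)) : 0 ≤ ⟪v, mulE M v⟫ := by
  rw [inner_mulE_self]
  exact hM.dotProduct_mulVec_nonneg _

theorem Matrix.PosDef.eq_zero_of_inner_mulE_self_nonpos {M : Matrix (Fin n) (Fin n) ℝ}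
    (hM : M.PosDef) {v : EuclideanSpace ℝ (Fin n)} (hv : ⟪v, mulE M v⟫ ≤ 0) : v = 0 := by
  by_contra hne
  rw [inner_mulE_self] at hv
  exact hv.not_gt (hM.dotProduct_mulVec_pos (by simpa using hne))

theorem Matrix.PosDef.eq_zero_of_mulE_transpose_eq_zero {B : Matrix (Fin m) (Fin n) ℝ}
    {P : Matrix (Fin m) (Fin m) ℝ} (hBP : (B * Bᵀ + P).PosDef) {v : EuclideanSpace ℝ (Fin m)}
    (hB : mulE Bᵀ v = 0) (hP : ⟪v, mulE P v⟫ ≤ 0) : v = 0 := by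
  refine hBP.eq_zero_of_inner_mulE_self_nonpos ?_
  rwa [mulE_add_left, mulE_mul, inner_add_right, ← inner_mulE_transpose, hB, inner_zero_left,
    zero_add]

end MatrixAction

theorem pdpg_unique_solution_general {dx dy : ℕ} (μx : ℝ) (hμx : 0 < μx)
    (f1 : EuclideanSpace ℝ (Fin dx) → ℝ)
    (f1' : EuclideanSpace ℝ (Fin dx) → EuclideanSpace ℝ (Fin dx))
    (hf1grad : ∀ x, HasGradientAt f1 (f1' x) x)
    (hf1sc : StrongConvex μx f1)
    (g2 : EuclideanSpace ℝ (Fin dy) → EReal)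
    (hg2prop : ProperER g2)
    (B : Matrix (Fin dy) (Fin dx) ℝ) (b : EuclideanSpace ℝ (Fin dy))
    (P : Matrix (Fin dy) (Fin dy) ℝ) (hP : P.PosSemidef)
    (hBP : (B * Bᵀ + P).PosDef)
    (xs xo : EuclideanSpace ℝ (Fin dx)) (ys yo : EuclideanSpace ℝ (Fin dy))
    (hxs : f1' xs + mulE Bᵀ ys = 0)
    (hys : IsSubgradAt g2 ys (mulE B xs - mulE P ys - b))
    (hxo : f1' xo + mulE Bᵀ yo = 0)
    (hyo : IsSubgradAt g2 yo (mulE B xo - mulE P yo - b)) :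
    xs = xo ∧ ys = yo := by
  have hgrad : f1' xs - f1' xo = -mulE Bᵀ (ys - yo) := by
    rw [eq_neg_of_add_eq_zero_left hxs, eq_neg_of_add_eq_zero_left hxo, mulE_sub]
    abel
  have hx := (strongConvexOn_iff_convex.2 hf1sc).mul_norm_sq_le_inner_gradient_sub hf1grad xo xs
  have hy := hys.inner_sub_nonneg hg2prop hyo
  rw [hgrad, inner_neg_left, inner_mulE_transpose] at hx
  rw [sub_sub_sub_cancel_right, sub_sub_sub_comm, ← mulE_sub, ← mulE_sub, inner_sub_left,
    real_inner_comm _ (mulE B _), real_inner_comm _ (mulE P _)] at hy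
  have hPy := hP.inner_mulE_self_nonneg (ys - yo)
  have hdx : μx * ‖xs - xo‖ ^ 2 ≤ 0 := by linarith
  obtain rfl : xs = xo := by
    simpa [sub_eq_zero] using nonpos_of_mul_nonpos_right hdx hμx
  refine ⟨rfl, sub_eq_zero.1 (hBP.eq_zero_of_mulE_transpose_eq_zero ?_ ?_)⟩
  · simpa using hgrad.symm
  · simpa [mulE] using hy

/-- uniqueness of the saddle point under Assumption A with `f2 = 0`,
`g1(y) = ½ yᵀPy + bᵀy`, `P ⪰ 0` symmetric and `BBᵀ + P ≻ 0`. -/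
theorem pdpg_unique_solution {dx dy : ℕ} (μx Lx : ℝ) (hμx : 0 < μx) (hLx : μx ≤ Lx)
    (f1 : EuclideanSpace ℝ (Fin dx) → ℝ)
    (f1' : EuclideanSpace ℝ (Fin dx) → EuclideanSpace ℝ (Fin dx))
    (hf1grad : ∀ x, HasGradientAt f1 (f1' x) x)
    (hf1sc : StrongConvex μx f1)
    (hf1sm : ∀ x x', ‖f1' x - f1' x'‖ ≤ Lx * ‖x - x'‖)
    (g2 : EuclideanSpace ℝ (Fin dy) → EReal)
    (hg2prop : ProperER g2) (hg2conv : ConvexER g2) (hg2lsc : LowerSemicontinuous g2)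
    (B : Matrix (Fin dy) (Fin dx) ℝ) (b : EuclideanSpace ℝ (Fin dy))
    (P : Matrix (Fin dy) (Fin dy) ℝ) (hP : P.PosSemidef)
    (hBP : (B * Bᵀ + P).PosDef)
    (xs xo : EuclideanSpace ℝ (Fin dx)) (ys yo : EuclideanSpace ℝ (Fin dy))
    (hxs : f1' xs + mulE Bᵀ ys = 0)
    (hys : IsSubgradAt g2 ys (mulE B xs - mulE P ys - b))
    (hxo : f1' xo + mulE Bᵀ yo = 0)
    (hyo : IsSubgradAt g2 yo (mulE B xo - mulE P yo - b)) :
    xs = xo ∧ ys = yo :=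
  pdpg_unique_solution_general μx hμx f1 f1' hf1grad hf1sc g2 hg2prop B b P hP hBP xs xo ys yo hxs
    hys hxo hyo
end

section
/- (Primal error bound for iDAPG.) Assume Assumption A' holds and the dual function φ is μφ-strongly convex with μφ > 0; set κφ = (σmax(B)²/μx + Ly)/μφ and β = (√κφ − 1)/(√κφ + 1). Let (x*, y*) be a saddle point of L(x,y) = f1(x) + f2(x) + yᵀBx − g1(y) − g2(y). Suppose z^k = y^k + β(y^k − y^{k−1}) and ‖x^{k+1} − x*(z^k)‖² ≤ ε²_{k+1}/σmax(B)². Then for all k ≥ 1: ‖x^{k+1} − x*‖² ≤ (2σmax(B)²/μx²)( (1 + β)‖y^k − y*‖ + β‖y^{k−1} − y*‖ )² + 2ε²_{k+1}/σmax(B)². -/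
open scoped RealInnerProductSpace
open Matrix

/-! The map `y ↦ x*(y)` is `σmax(B)/μx`-Lipschitz: minimizers `u, u'` of a `μ`-strongly convex
function tilted by `⟪c, ·⟫` and `⟪c', ·⟫` satisfy `μ‖u - u'‖² ≤ ⟪c - c', u' - u⟫`, by adding the
quadratic growth inequalities at the two minimizers. The saddle-point condition makes `x*` the
minimizer tilted by `Bᵀy*`, so `‖x^{k+1} - x*‖` is at most the inexactness
`‖x^{k+1} - x*(z^k)‖` plus `(σmax(B)/μx)‖z^k - y*‖`, and the extrapolation bounds `‖z^k - y*‖` by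
`(1 + β)‖y^k - y*‖ + β‖y^{k-1} - y*‖` once `β ≥ 0`, i.e. `κφ ≥ 1`. That holds because `∇φ` is
`(Ly + σmax(B)²/μx)`-Lipschitz, and no gradient of a `μφ`-strongly convex function has a smaller
Lipschitz constant than `μφ`. -/

open Set Filter Topology

theorem norm_sub_sq_le_two_mul {E : Type*} [SeminormedAddCommGroup E] (a b c : E) :
    ‖a - c‖ ^ 2 ≤ 2 * (‖a - b‖ ^ 2 + ‖b - c‖ ^ 2) :=
  (pow_le_pow_left₀ (norm_nonneg _) (norm_sub_le_norm_sub_add_norm_sub a b c) 2).trans add_sq_le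

theorem sqrt_sub_one_div_sqrt_add_one_nonneg {κ : ℝ} (hκ : 1 ≤ κ) :
    0 ≤ (Real.sqrt κ - 1) / (Real.sqrt κ + 1) := by
  have := Real.one_le_sqrt.2 hκ
  exact div_nonneg (by linarith) (by linarith)

theorem norm_add_smul_sub_sub_le {E : Type*} [SeminormedAddCommGroup E] [NormedSpace ℝ E]
    {β : ℝ} (hβ : 0 ≤ β) (y y' c : E) :
    ‖y + β • (y - y') - c‖ ≤ (1 + β) * ‖y - c‖ + β * ‖y' - c‖ := by
  calc ‖y + β • (y - y') - c‖ = ‖(1 + β) • (y - c) - β • (y' - c)‖ := by congr 1; module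
    _ ≤ ‖(1 + β) • (y - c)‖ + ‖β • (y' - c)‖ := norm_sub_le _ _
    _ = (1 + β) * ‖y - c‖ + β * ‖y' - c‖ := by
      rw [norm_smul, norm_smul, Real.norm_of_nonneg hβ, Real.norm_of_nonneg (by linarith)]

section NormedSpace

variable {E : Type*} [NormedAddCommGroup E] [NormedSpace ℝ E] {s : Set E} {μ : ℝ}

theorem StrongConvexOn.add_sq_le_of_isMinOn {F : E → ℝ} {u x : E} (hF : StrongConvexOn s μ F)
    (hmin : IsMinOn F s u) (hu : u ∈ s) (hx : x ∈ s) :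
    F u + μ / 2 * ‖x - u‖ ^ 2 ≤ F x := by
  have hsegment : ∀ t ∈ Ioo (0 : ℝ) 1, F u + (1 - t) * (μ / 2 * ‖x - u‖ ^ 2) ≤ F x := by
    rintro t ⟨ht0, ht1⟩
    have hconv := hF.2 hu hx (by linarith : 0 ≤ 1 - t) ht0.le (sub_add_cancel 1 t)
    have hle := isMinOn_iff.1 hmin _
      (hF.1 hu hx (by linarith : 0 ≤ 1 - t) ht0.le (sub_add_cancel 1 t))
    rw [norm_sub_rev, smul_eq_mul, smul_eq_mul] at hconv
    beta_reduce at hconv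
    refine le_of_mul_le_mul_left ?_ ht0
    linarith
  have hlim : Tendsto (fun t : ℝ => F u + (1 - t) * (μ / 2 * ‖x - u‖ ^ 2)) (𝓝[>] 0)
      (𝓝 (F u + (1 - 0) * (μ / 2 * ‖x - u‖ ^ 2))) :=
    (Continuous.tendsto (by fun_prop) 0).mono_left nhdsWithin_le_nhds
  simpa using le_of_tendsto hlim (eventually_of_mem (Ioo_mem_nhdsGT one_pos) hsegment)

end NormedSpace

section InnerProductSpace

variable {E : Type*} [NormedAddCommGroup E] [InnerProductSpace ℝ E] {s : Set E} {μ : ℝ}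

theorem StrongConvexOn.norm_sub_le_of_isMinOn_add_inner {h : E → ℝ} {c c' u u' : E} (hμ : 0 < μ)
    (hh : StrongConvexOn s μ h) (hu : u ∈ s) (hu' : u' ∈ s)
    (hmin : IsMinOn (fun p => h p + ⟪c, p⟫) s u) (hmin' : IsMinOn (fun p => h p + ⟪c', p⟫) s u') :
    ‖u - u'‖ ≤ ‖c - c'‖ / μ := by
  have htilt (c : E) : StrongConvexOn s μ (fun p => h p + ⟪c, p⟫) :=
    (hh.add (uniformConvexOn_zero.2 ((innerₛₗ ℝ c).convexOn hh.1))).mono (add_zero _).ge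
  have h₁ := (htilt c).add_sq_le_of_isMinOn hmin hu hu'
  have h₂ := (htilt c').add_sq_le_of_isMinOn hmin' hu' hu
  have hmono : μ * ‖u - u'‖ ^ 2 ≤ ‖c - c'‖ * ‖u - u'‖ := by
    calc μ * ‖u - u'‖ ^ 2 ≤ ⟪c - c', u' - u⟫ := by
          rw [norm_sub_rev] at h₁
          simp only [inner_sub_left, inner_sub_right]
          linarith
      _ ≤ ‖c - c'‖ * ‖u - u'‖ := by rw [norm_sub_rev u]; exact real_inner_le_norm _ _
  rw [le_div_iff₀ hμ]
  nlinarith [norm_nonneg (u - u'), norm_nonneg (c - c')]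

variable [CompleteSpace E] {f : E → ℝ} {x g : E}

theorem ConvexOn.add_inner_sub_le_of_hasGradientAt (hf : ConvexOn ℝ univ f)
    (hg : HasGradientAt f g x) (y : E) : f x + ⟪g, y - x⟫ ≤ f y := by
  let ℓ : ℝ →ᵃ[ℝ] E := AffineMap.lineMap x y
  have hline : ConvexOn ℝ univ (f ∘ ℓ) := by
    simpa only [preimage_univ] using hf.comp_affineMap ℓ
  have hderiv : HasDerivAt (f ∘ ℓ) ⟪g, y - x⟫ 0 := by
    have := hg.hasFDerivAt
    rw [← AffineMap.lineMap_apply_zero (k := ℝ) x y] at this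
    simpa only [InnerProductSpace.toDual_apply_apply] using
      this.comp_hasDerivAt (0 : ℝ) AffineMap.hasDerivAt_lineMap
  have := hline.le_slope_of_hasDerivAt (mem_univ 0) (mem_univ 1) one_pos hderiv
  simp only [slope_def_field, Function.comp_apply, AffineMap.lineMap_apply_one,
    AffineMap.lineMap_apply_zero, sub_zero, div_one, ℓ] at this
  linarith

theorem StrongConvexOn.add_inner_sub_add_sq_le_of_hasGradientAt (hf : StrongConvexOn univ μ f)
    (hg : HasGradientAt f g x) (y : E) : f x + ⟪g, y - x⟫ + μ / 2 * ‖y - x‖ ^ 2 ≤ f y := by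
  have hgrad : HasGradientAt (fun z => f z - μ / 2 * ‖z‖ ^ 2) (g - μ • x) x := by
    rw [hasGradientAt_iff_hasFDerivAt] at hg ⊢
    refine (hg.sub ((hasStrictFDerivAt_norm_sq x).hasFDerivAt.const_mul (μ / 2))).congr_fderiv ?_
    ext v
    simp only [_root_.sub_apply, InnerProductSpace.toDual_apply_apply, _root_.smul_apply,
      coe_innerSL_apply, nsmul_eq_mul, Nat.cast_ofNat, smul_eq_mul, map_sub, map_smul,
      sub_right_inj]
    ring
  have := (strongConvexOn_iff_convex.1 hf).add_inner_sub_le_of_hasGradientAt hgrad y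
  rw [norm_sub_sq_real]
  simp only [inner_sub_left, inner_sub_right, real_inner_smul_left,
    real_inner_self_eq_norm_sq] at this ⊢
  rw [← real_inner_comm x y] at this
  linarith

theorem StrongConvexOn.le_of_lipschitz_gradient [Nontrivial E] {f' : E → E} {L : ℝ}
    (hf : StrongConvexOn univ μ f) (hg : ∀ x, HasGradientAt f (f' x) x)
    (hL : ∀ x y, ‖f' x - f' y‖ ≤ L * ‖x - y‖) : μ ≤ L := by
  obtain ⟨x, hx⟩ := exists_ne (0 : E)
  have h₁ := hf.add_inner_sub_add_sq_le_of_hasGradientAt (hg x) 0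
  have h₂ := hf.add_inner_sub_add_sq_le_of_hasGradientAt (hg 0) x
  have hmono : μ * ‖x‖ ^ 2 ≤ L * ‖x‖ ^ 2 := by
    calc μ * ‖x‖ ^ 2 ≤ ⟪f' x - f' 0, x⟫ := by
          simp only [zero_sub, sub_zero, norm_neg, inner_neg_right, inner_sub_left] at h₁ h₂ ⊢
          linarith
      _ ≤ ‖f' x - f' 0‖ * ‖x‖ := real_inner_le_norm _ _
      _ ≤ L * ‖x‖ * ‖x‖ := by gcongr; simpa using hL x 0
      _ = L * ‖x‖ ^ 2 := by ring
  exact le_of_mul_le_mul_right hmono (by positivity)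

end InnerProductSpace

section EReal

variable {n : ℕ} {f : EuclideanSpace ℝ (Fin n) → EReal}

-- `↑(…)` keeps the cast outside the sum; `((… : ℝ) : EReal)` would push it to the leaves.
theorem EReal.coe_add_add_coe_of_ne_top {e : EReal} (ht : e ≠ ⊤) (hb : e ≠ ⊥) (a b : ℝ) :
    (a : EReal) + e + b = (↑(a + e.toReal + b) : EReal) := by
  lift e to ℝ using ⟨ht, hb⟩
  norm_cast

theorem ConvexER.convexOn_toReal (hf : ConvexER f) (hbot : ∀ x, f x ≠ ⊥) :
    ConvexOn ℝ {x | f x ≠ ⊤} fun x => (f x).toReal := by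
  have hle : ∀ x ∈ {x | f x ≠ ⊤}, ∀ y ∈ {x | f x ≠ ⊤}, ∀ a b : ℝ, 0 ≤ a → 0 ≤ b → a + b = 1 →
      f (a • x + b • y) ≤ (↑(a * (f x).toReal + b * (f y).toReal) : EReal) := by
    intro x hx y hy a b ha hb hab
    rw [EReal.coe_add, EReal.coe_mul, EReal.coe_mul, EReal.coe_toReal hx (hbot x),
      EReal.coe_toReal hy (hbot y)]
    exact hf x y a b ha hb hab
  refine ⟨fun x hx y hy a b ha hb hab ↦ ?_, fun x hx y hy a b ha hb hab ↦ ?_⟩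
  · exact ne_top_of_le_ne_top (EReal.coe_ne_top _) (hle x hx y hy a b ha hb hab)
  · have := EReal.toReal_le_toReal (hle x hx y hy a b ha hb hab) (hbot _) (EReal.coe_ne_top _)
    norm_cast at this

theorem IsSubgradAt.ne_top_s13 {x s z : EuclideanSpace ℝ (Fin n)} (h : IsSubgradAt f x s)
    (hz : f z ≠ ⊤) : f x ≠ ⊤ :=
  fun hx ↦ hz (top_le_iff.1 (by simpa [hx] using h z))

def IsTiltedMinimizer (f₁ : EuclideanSpace ℝ (Fin n) → ℝ) (f₂ : EuclideanSpace ℝ (Fin n) → EReal)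
    (c u : EuclideanSpace ℝ (Fin n)) : Prop :=
  ∀ p, (f₁ u : EReal) + f₂ u + ((⟪c, u⟫ : ℝ) : EReal)
    ≤ (f₁ p : EReal) + f₂ p + ((⟪c, p⟫ : ℝ) : EReal)

variable {f₁ : EuclideanSpace ℝ (Fin n) → ℝ} {f₂ : EuclideanSpace ℝ (Fin n) → EReal}
  {c u : EuclideanSpace ℝ (Fin n)}

theorem IsTiltedMinimizer.ne_top_s13 (h : IsTiltedMinimizer f₁ f₂ c u) (hf₂ : ProperER f₂) :
    f₂ u ≠ ⊤ := by
  obtain ⟨hbot, x₀, hx₀⟩ := hf₂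
  intro hu
  have := h x₀
  rw [hu, EReal.coe_add_top, EReal.top_add_coe, EReal.coe_add_add_coe_of_ne_top hx₀ (hbot x₀),
    top_le_iff] at this
  exact EReal.coe_ne_top _ this

theorem IsTiltedMinimizer.isMinOn (h : IsTiltedMinimizer f₁ f₂ c u) (hf₂ : ProperER f₂) :
    IsMinOn (fun p => f₁ p + (f₂ p).toReal + ⟪c, p⟫) {p | f₂ p ≠ ⊤} u := by
  refine isMinOn_iff.2 fun p hp ↦ ?_
  have := h p
  rwa [EReal.coe_add_add_coe_of_ne_top (h.ne_top_s13 hf₂) (hf₂.1 u),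
    EReal.coe_add_add_coe_of_ne_top hp (hf₂.1 p), EReal.coe_le_coe_iff] at this

theorem IsTiltedMinimizer.norm_sub_le {μ : ℝ} {c' u' : EuclideanSpace ℝ (Fin n)} (hμ : 0 < μ)
    (hf₁ : StrongConvex μ f₁) (hf₂ : ProperER f₂) (hf₂c : ConvexER f₂)
    (hu : IsTiltedMinimizer f₁ f₂ c u) (hu' : IsTiltedMinimizer f₁ f₂ c' u') :
    ‖u - u'‖ ≤ ‖c - c'‖ / μ := by
  have hf₂' := hf₂c.convexOn_toReal hf₂.1
  have hf₁' : StrongConvexOn {p | f₂ p ≠ ⊤} μ f₁ :=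
    ⟨hf₂'.1, fun x _ y _ ↦ (strongConvexOn_iff_convex.2 hf₁).2 (mem_univ x) (mem_univ y)⟩
  have hsum : StrongConvexOn {p | f₂ p ≠ ⊤} μ fun p => f₁ p + (f₂ p).toReal :=
    (hf₁'.add (uniformConvexOn_zero.2 hf₂')).mono (add_zero _).ge
  exact hsum.norm_sub_le_of_isMinOn_add_inner hμ (hu.ne_top_s13 hf₂) (hu'.ne_top_s13 hf₂)
    (hu.isMinOn hf₂) (hu'.isMinOn hf₂)

theorem IsSubgradAt.isTiltedMinimizer {x g : EuclideanSpace ℝ (Fin n)}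
    (hsub : IsSubgradAt f₂ x (-c - g)) (hf₁ : ConvexOn ℝ univ f₁) (hg : HasGradientAt f₁ g x)
    (hbot : ∀ p, f₂ p ≠ ⊥) : IsTiltedMinimizer f₁ f₂ c x := by
  intro p
  by_cases hp : f₂ p = ⊤
  · simp [hp]
  have hx := hsub.ne_top_s13 hp
  have hsubR : (f₂ x).toReal + ⟪-c - g, p - x⟫ ≤ (f₂ p).toReal := by
    have := hsub p
    rw [← EReal.coe_toReal hx (hbot x), ← EReal.coe_toReal hp (hbot p)] at this
    exact_mod_cast this
  have hfo := hf₁.add_inner_sub_le_of_hasGradientAt hg p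
  rw [EReal.coe_add_add_coe_of_ne_top hx (hbot x), EReal.coe_add_add_coe_of_ne_top hp (hbot p),
    EReal.coe_le_coe_iff]
  simp only [inner_sub_left, inner_sub_right, inner_neg_left] at hsubR hfo
  linarith

end EReal

section Matrix

variable {m n : ℕ} (B : Matrix (Fin m) (Fin n) ℝ)

theorem sigmaMax_nonneg : 0 ≤ sigmaMax B := norm_nonneg _

theorem norm_mulE_le (x : EuclideanSpace ℝ (Fin n)) : ‖mulE B x‖ ≤ sigmaMax B * ‖x‖ :=
  (LinearMap.toContinuousLinearMap (Matrix.toEuclideanLin B)).le_opNorm x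

theorem mulE_sub_s13 (x y : EuclideanSpace ℝ (Fin n)) : mulE B (x - y) = mulE B x - mulE B y :=
  map_sub _ x y

theorem sigmaMax_transpose : sigmaMax Bᵀ = sigmaMax B := by
  rw [sigmaMax, sigmaMax, ← Matrix.conjTranspose_eq_transpose_of_trivial,
    Matrix.toEuclideanLin_conjTranspose_eq_adjoint, LinearMap.adjoint_toContinuousLinearMap,
    LinearIsometryEquiv.norm_map]

variable {B}

theorem IsTiltedMinimizer.norm_sub_le_sigmaMax_div_mul {f₁ : EuclideanSpace ℝ (Fin n) → ℝ}
    {f₂ : EuclideanSpace ℝ (Fin n) → EReal} {μ : ℝ} {u u' : EuclideanSpace ℝ (Fin n)}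
    {w w' : EuclideanSpace ℝ (Fin m)} (hμ : 0 < μ) (hf₁ : StrongConvex μ f₁) (hf₂ : ProperER f₂)
    (hf₂c : ConvexER f₂) (hu : IsTiltedMinimizer f₁ f₂ (mulE Bᵀ w) u)
    (hu' : IsTiltedMinimizer f₁ f₂ (mulE Bᵀ w') u') :
    ‖u - u'‖ ≤ sigmaMax B / μ * ‖w - w'‖ := by
  calc ‖u - u'‖ ≤ ‖mulE Bᵀ w - mulE Bᵀ w'‖ / μ := hu.norm_sub_le hμ hf₁ hf₂ hf₂c hu'
    _ ≤ sigmaMax B * ‖w - w'‖ / μ := by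
      rw [← mulE_sub_s13, ← sigmaMax_transpose]
      gcongr
      exact norm_mulE_le _ _
    _ = sigmaMax B / μ * ‖w - w'‖ := by ring

theorem norm_sub_mulE_sub_sub_mulE_le {g : EuclideanSpace ℝ (Fin m) → EuclideanSpace ℝ (Fin m)}
    {x : EuclideanSpace ℝ (Fin m) → EuclideanSpace ℝ (Fin n)} {L ℓ : ℝ}
    (hg : ∀ w w', ‖g w - g w'‖ ≤ L * ‖w - w'‖) (hx : ∀ w w', ‖x w - x w'‖ ≤ ℓ * ‖w - w'‖)
    (w w' : EuclideanSpace ℝ (Fin m)) :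
    ‖(g w - mulE B (x w)) - (g w' - mulE B (x w'))‖ ≤ (L + sigmaMax B * ℓ) * ‖w - w'‖ := by
  calc ‖(g w - mulE B (x w)) - (g w' - mulE B (x w'))‖
      = ‖(g w - g w') - mulE B (x w - x w')‖ := by rw [mulE_sub_s13]; congr 1; abel
    _ ≤ ‖g w - g w'‖ + ‖mulE B (x w - x w')‖ := norm_sub_le _ _
    _ ≤ L * ‖w - w'‖ + sigmaMax B * (ℓ * ‖w - w'‖) := by
      gcongr
      · exact hg w w'
      · exact (norm_mulE_le B _).trans (by gcongr; exacts [sigmaMax_nonneg B, hx w w'])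
    _ = (L + sigmaMax B * ℓ) * ‖w - w'‖ := by ring

theorem StrongConvex.momentum_nonneg [Nontrivial (EuclideanSpace ℝ (Fin m))]
    {φ : EuclideanSpace ℝ (Fin m) → ℝ} {g : EuclideanSpace ℝ (Fin m) → EuclideanSpace ℝ (Fin m)}
    {x : EuclideanSpace ℝ (Fin m) → EuclideanSpace ℝ (Fin n)} {μ μφ L κ β : ℝ}
    (hφ : StrongConvex μφ φ) (hμφ : 0 < μφ)
    (hφgrad : ∀ w, HasGradientAt φ (g w - mulE B (x w)) w)
    (hg : ∀ w w', ‖g w - g w'‖ ≤ L * ‖w - w'‖)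
    (hx : ∀ w w', ‖x w - x w'‖ ≤ sigmaMax B / μ * ‖w - w'‖)
    (hκ : κ = (sigmaMax B ^ 2 / μ + L) / μφ) (hβ : β = (Real.sqrt κ - 1) / (Real.sqrt κ + 1)) :
    0 ≤ β := by
  have hμφ_le : μφ ≤ L + sigmaMax B * (sigmaMax B / μ) :=
    (strongConvexOn_iff_convex.2 hφ).le_of_lipschitz_gradient hφgrad
      (norm_sub_mulE_sub_sub_mulE_le hg hx)
  refine hβ ▸ sqrt_sub_one_div_sqrt_add_one_nonneg ?_
  rw [hκ, le_div_iff₀ hμφ]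
  linarith [show sigmaMax B * (sigmaMax B / μ) = sigmaMax B ^ 2 / μ by ring]

end Matrix

theorem idapg_primal_error_bound_general {dx dy : ℕ} (μx Ly μφ : ℝ)
    (hμx : 0 < μx) (hμφ : 0 < μφ)
    (f1 : EuclideanSpace ℝ (Fin dx) → ℝ)
    (f1' : EuclideanSpace ℝ (Fin dx) → EuclideanSpace ℝ (Fin dx))
    (hf1grad : ∀ x, HasGradientAt f1 (f1' x) x)
    (hf1sc : StrongConvex μx f1)
    (g1' : EuclideanSpace ℝ (Fin dy) → EuclideanSpace ℝ (Fin dy))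
    (hg1sm : ∀ y y', ‖g1' y - g1' y'‖ ≤ Ly * ‖y - y'‖)
    (f2 : EuclideanSpace ℝ (Fin dx) → EReal)
    (hf2prop : ProperER f2) (hf2conv : ConvexER f2)
    (B : Matrix (Fin dy) (Fin dx) ℝ)
    (xstar : EuclideanSpace ℝ (Fin dy) → EuclideanSpace ℝ (Fin dx))
    (hxstar : ∀ y x, (f1 (xstar y) : EReal) + f2 (xstar y) + ((⟪mulE Bᵀ y, xstar y⟫ : ℝ) : EReal)
        ≤ (f1 x : EReal) + f2 x + ((⟪mulE Bᵀ y, x⟫ : ℝ) : EReal))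
    -- the dual function φ, its gradient and strong convexity
    (φ : EuclideanSpace ℝ (Fin dy) → ℝ)
    (hφgrad : ∀ y, HasGradientAt φ (g1' y - mulE B (xstar y)) y)
    (hφsc : StrongConvex μφ φ)
    (κφ β : ℝ)
    (hκφ : κφ = (sigmaMax B ^ 2 / μx + Ly) / μφ)
    (hβ : β = (Real.sqrt κφ - 1) / (Real.sqrt κφ + 1))
    -- the saddle point (x*, y*)
    (xs : EuclideanSpace ℝ (Fin dx)) (ys : EuclideanSpace ℝ (Fin dy))
    (hsadx : IsSubgradAt f2 xs (-mulE Bᵀ ys - f1' xs))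
    -- the iterates
    (x : ℕ → EuclideanSpace ℝ (Fin dx))
    (y z : ℕ → EuclideanSpace ℝ (Fin dy)) (ε : ℕ → ℝ)
    (hz : ∀ k, 1 ≤ k → z k = y k + β • (y k - y (k - 1)))
    (herr : ∀ k, ‖x (k + 1) - xstar (z k)‖ ^ 2 ≤ ε (k + 1) ^ 2 / sigmaMax B ^ 2) :
    ∀ k : ℕ, 1 ≤ k →
      ‖x (k + 1) - xs‖ ^ 2 ≤
        (2 * sigmaMax B ^ 2 / μx ^ 2) *
          ((1 + β) * ‖y k - ys‖ + β * ‖y (k - 1) - ys‖) ^ 2 +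
        2 * ε (k + 1) ^ 2 / sigmaMax B ^ 2 := by
  have hxs : IsTiltedMinimizer f1 f2 (mulE Bᵀ ys) xs :=
    hsadx.isTiltedMinimizer ((strongConvexOn_iff_convex.2 hf1sc).convexOn fun r ↦ by positivity)
      (hf1grad xs) hf2prop.1
  have hmin (w : EuclideanSpace ℝ (Fin dy)) : IsTiltedMinimizer f1 f2 (mulE Bᵀ w) (xstar w) :=
    hxstar w
  have hLip (w w' : EuclideanSpace ℝ (Fin dy)) :
      ‖xstar w - xstar w'‖ ≤ sigmaMax B / μx * ‖w - w'‖ :=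
    (hmin w).norm_sub_le_sigmaMax_div_mul hμx hf1sc hf2prop hf2conv (hmin w')
  have hz_bound : ∀ k, 1 ≤ k → ‖z k - ys‖ ≤ (1 + β) * ‖y k - ys‖ + β * ‖y (k - 1) - ys‖ := by
    -- in dimension zero `β` may be negative, but every vector vanishes
    rcases subsingleton_or_nontrivial (EuclideanSpace ℝ (Fin dy)) with _ | _
    · intro k _
      rw [Subsingleton.elim (z k) ys, Subsingleton.elim (y k) ys, Subsingleton.elim (y (k - 1)) ys]
      simp
    · intro k hk
      rw [hz k hk]
      exact norm_add_smul_sub_sub_le (hφsc.momentum_nonneg hμφ hφgrad hg1sm hLip hκφ hβ) _ _ _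
  intro k hk
  calc ‖x (k + 1) - xs‖ ^ 2
      ≤ 2 * (‖x (k + 1) - xstar (z k)‖ ^ 2 + ‖xstar (z k) - xs‖ ^ 2) := norm_sub_sq_le_two_mul _ _ _
    _ ≤ 2 * (ε (k + 1) ^ 2 / sigmaMax B ^ 2 +
          (sigmaMax B / μx * ((1 + β) * ‖y k - ys‖ + β * ‖y (k - 1) - ys‖)) ^ 2) := by
      gcongr
      · exact herr k
      · exact ((hmin (z k)).norm_sub_le_sigmaMax_div_mul hμx hf1sc hf2prop hf2conv hxs).trans
          (by gcongr; exacts [div_nonneg (sigmaMax_nonneg B) hμx.le, hz_bound k hk])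
    _ = _ := by ring

/-- primal error bound for iDAPG. -/
theorem idapg_primal_error_bound {dx dy : ℕ} (μx Lx Ly μφ : ℝ)
    (hμx : 0 < μx) (hLx : μx ≤ Lx) (hLy : 0 ≤ Ly) (hμφ : 0 < μφ)
    (f1 : EuclideanSpace ℝ (Fin dx) → ℝ)
    (f1' : EuclideanSpace ℝ (Fin dx) → EuclideanSpace ℝ (Fin dx))
    (hf1grad : ∀ x, HasGradientAt f1 (f1' x) x)
    (hf1sc : StrongConvex μx f1)
    (hf1sm : ∀ x x', ‖f1' x - f1' x'‖ ≤ Lx * ‖x - x'‖)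
    (g1 : EuclideanSpace ℝ (Fin dy) → ℝ)
    (g1' : EuclideanSpace ℝ (Fin dy) → EuclideanSpace ℝ (Fin dy))
    (hg1grad : ∀ y, HasGradientAt g1 (g1' y) y)
    (hg1conv : ConvexOn ℝ Set.univ g1)
    (hg1sm : ∀ y y', ‖g1' y - g1' y'‖ ≤ Ly * ‖y - y'‖)
    (f2 : EuclideanSpace ℝ (Fin dx) → EReal)
    (hf2prop : ProperER f2) (hf2conv : ConvexER f2) (hf2lsc : LowerSemicontinuous f2)
    (g2 : EuclideanSpace ℝ (Fin dy) → EReal)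
    (hg2prop : ProperER g2) (hg2conv : ConvexER g2) (hg2lsc : LowerSemicontinuous g2)
    (B : Matrix (Fin dy) (Fin dx) ℝ) (hB : 0 < sigmaMax B)
    (xstar : EuclideanSpace ℝ (Fin dy) → EuclideanSpace ℝ (Fin dx))
    (hxstar : ∀ y x, (f1 (xstar y) : EReal) + f2 (xstar y) + ((⟪mulE Bᵀ y, xstar y⟫ : ℝ) : EReal)
        ≤ (f1 x : EReal) + f2 x + ((⟪mulE Bᵀ y, x⟫ : ℝ) : EReal))
    -- the dual function φ, its gradient and strong convexity
    (φ : EuclideanSpace ℝ (Fin dy) → ℝ)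
    (hφgrad : ∀ y, HasGradientAt φ (g1' y - mulE B (xstar y)) y)
    (hφsc : StrongConvex μφ φ)
    (κφ β : ℝ)
    (hκφ : κφ = (sigmaMax B ^ 2 / μx + Ly) / μφ)
    (hβ : β = (Real.sqrt κφ - 1) / (Real.sqrt κφ + 1))
    -- the saddle point (x*, y*)
    (xs : EuclideanSpace ℝ (Fin dx)) (ys : EuclideanSpace ℝ (Fin dy))
    (hsadx : IsSubgradAt f2 xs (-mulE Bᵀ ys - f1' xs))
    (hsady : IsSubgradAt g2 ys (mulE B xs - g1' ys))
    -- the iterates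
    (x : ℕ → EuclideanSpace ℝ (Fin dx))
    (y z : ℕ → EuclideanSpace ℝ (Fin dy)) (ε : ℕ → ℝ)
    (hz : ∀ k, 1 ≤ k → z k = y k + β • (y k - y (k - 1)))
    (herr : ∀ k, ‖x (k + 1) - xstar (z k)‖ ^ 2 ≤ ε (k + 1) ^ 2 / sigmaMax B ^ 2) :
    ∀ k : ℕ, 1 ≤ k →
      ‖x (k + 1) - xs‖ ^ 2 ≤
        (2 * sigmaMax B ^ 2 / μx ^ 2) *
          ((1 + β) * ‖y k - ys‖ + β * ‖y (k - 1) - ys‖) ^ 2 +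
        2 * ε (k + 1) ^ 2 / sigmaMax B ^ 2 :=
  idapg_primal_error_bound_general μx Ly μφ hμx hμφ f1 f1' hf1grad hf1sc g1' hg1sm f2 hf2prop
    hf2conv B xstar hxstar φ hφgrad hφsc κφ β hκφ hβ xs ys hsadx x y z ε hz herr
end
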